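/- (Theorem 5.1, the Adler-Shiota-van Moerbeke formula, case ν = μ = 1, in tau-function form.) Suppose τ : (ℕ → ℂ) → ℂ is continuous and satisfies the KP Fay identity. Then for all x : ℕ → ℂ and all pairwise distinct nonzero γ, ζ, z ∈ ℂ: (γ/(γ − ζ)) · ( ((z − ζ)/(z − γ)) · τ(x + [γ⁻¹] − [ζ⁻¹] − [z⁻¹]) · τ(x) − τ(x − [z⁻¹]) · τ(x + [γ⁻¹] − [ζ⁻¹]) ) = (γ/(z − γ)) · τ(x + [γ⁻¹] − [z⁻¹]) · τ(x − [ζ⁻¹]). (This is the identity X₁(γ,ζ) ⋆ w₁(z) = ((γ−ζ)/γ) Y₁₁(γ,ζ) w₁(z) of the paper, written out for the tau function with the exponential factors cancelled and multiplied through by τ².) -/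

import Mathlib

/-- The shift `[s] : ℕ → ℂ`, `[s](k) = s^(k+1)/(k+1)`, representing the
sequence `(s, s²/2, s³/3, …)` of time variables. -/
noncomputable def sh (s : ℂ) : ℕ → ℂ := fun k => s ^ (k + 1) / ((k : ℂ) + 1)

/-- The Fay identity of the KP hierarchy for a tau function `τ`. -/
def KPFay (τ : (ℕ → ℂ) → ℂ) : Prop :=
  ∀ x : ℕ → ℂ, ∀ s0 s1 s2 s3 : ℂ,
    s0 ≠ 0 → s1 ≠ 0 → s2 ≠ 0 → s3 ≠ 0 →
    s0 ≠ s1 → s0 ≠ s2 → s0 ≠ s3 → s1 ≠ s2 → s1 ≠ s3 → s2 ≠ s3 →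
    (s0 - s1) * (s2 - s3) * τ (x + sh s0 + sh s1) * τ (x + sh s2 + sh s3)
      + (s0 - s2) * (s3 - s1) * τ (x + sh s0 + sh s2) * τ (x + sh s3 + sh s1)
      + (s0 - s3) * (s1 - s2) * τ (x + sh s0 + sh s3) * τ (x + sh s1 + sh s2)
      = 0

lemma sh_zero : sh 0 = 0 := by
  funext k
  simp [sh]

lemma continuous_sh : Continuous sh := by
  apply continuous_pi
  intro k
  exact (continuous_pow (k + 1)).div_const _

/-- Degenerate Fay identity: the limit `s3 → 0` of the Fay identity. -/
lemma fay_deg (τ : (ℕ → ℂ) → ℂ) (hc : Continuous τ) (hFay : KPFay τ)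
    (y : ℕ → ℂ) (a b c : ℂ) (ha : a ≠ 0) (hb : b ≠ 0) (hc0 : c ≠ 0)
    (hab : a ≠ b) (hac : a ≠ c) (hbc : b ≠ c) :
    (a - b) * c * τ (y + sh a + sh b) * τ (y + sh c)
      + (a - c) * (-b) * τ (y + sh a + sh c) * τ (y + sh b)
      + a * (b - c) * τ (y + sh a) * τ (y + sh b + sh c) = 0 := by
  set F : ℂ → ℂ := fun s =>
    (a - b) * (c - s) * τ (y + sh a + sh b) * τ (y + sh c + sh s)
      + (a - c) * (s - b) * τ (y + sh a + sh c) * τ (y + sh s + sh b)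
      + (a - s) * (b - c) * τ (y + sh a + sh s) * τ (y + sh b + sh c) with hF
  have hFcont : Continuous F := by
    apply Continuous.add
    apply Continuous.add
    · exact ((continuous_const.mul (continuous_const.sub continuous_id)).mul
        continuous_const).mul (hc.comp (continuous_const.add continuous_sh))
    · exact ((continuous_const.mul (continuous_id.sub continuous_const)).mul
        continuous_const).mul
        (hc.comp ((continuous_const.add continuous_sh).add continuous_const))
    · exact (((continuous_const.sub continuous_id).mul continuous_const).mul
        (hc.comp (continuous_const.add continuous_sh))).mul continuous_const
  have hdense : Dense ({(0 : ℂ), a, b, c}ᶜ : Set ℂ) :=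
    Set.Countable.dense_compl ℂ (Set.toFinite _).countable
  have hzero : Set.EqOn F (fun _ => (0 : ℂ)) ({(0 : ℂ), a, b, c}ᶜ : Set ℂ) := by
    intro s hs
    simp only [Set.mem_compl_iff, Set.mem_insert_iff, Set.mem_singleton_iff,
      not_or] at hs
    obtain ⟨hs0, hsa, hsb, hsc⟩ := hs
    have := hFay y a b c s ha hb hc0 hs0 hab hac (Ne.symm hsa) hbc (Ne.symm hsb)
      (Ne.symm hsc)
    simp only [hF]
    linear_combination this
  have hFeq : F = fun _ => (0 : ℂ) :=
    Continuous.ext_on hdense hFcont continuous_const hzero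
  have h0 : F 0 = 0 := by rw [hFeq]
  simp only [hF, sh_zero, add_zero, zero_add, sub_zero] at h0
  linear_combination h0

/-- Theorem 5.1, ASvM formula, case ν = μ = 1, tau form. -/
theorem asvm_nu_one_mu_one (τ : (ℕ → ℂ) → ℂ) (hc : Continuous τ)
    (hFay : KPFay τ) :
    ∀ x : ℕ → ℂ, ∀ γ ζ z : ℂ,
      γ ≠ 0 → ζ ≠ 0 → z ≠ 0 → γ ≠ ζ → γ ≠ z → ζ ≠ z →
      (γ / (γ - ζ)) * (((z - ζ) / (z - γ))
          * τ (x + sh γ⁻¹ - sh ζ⁻¹ - sh z⁻¹) * τ x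
        - τ (x - sh z⁻¹) * τ (x + sh γ⁻¹ - sh ζ⁻¹))
      = (γ / (z - γ)) * τ (x + sh γ⁻¹ - sh z⁻¹) * τ (x - sh ζ⁻¹) := by
  intro x γ ζ z hγ hζ hz hγζ hγz hζz
  have ha : (γ : ℂ)⁻¹ ≠ 0 := inv_ne_zero hγ
  have hb : (ζ : ℂ)⁻¹ ≠ 0 := inv_ne_zero hζ
  have hcz : (z : ℂ)⁻¹ ≠ 0 := inv_ne_zero hz
  have hab : (γ : ℂ)⁻¹ ≠ ζ⁻¹ := fun h => hγζ (inv_injective h)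
  have hac : (γ : ℂ)⁻¹ ≠ z⁻¹ := fun h => hγz (inv_injective h)
  have hbc : (ζ : ℂ)⁻¹ ≠ z⁻¹ := fun h => hζz (inv_injective h)
  have key := fay_deg τ hc hFay (x - sh ζ⁻¹ - sh z⁻¹) γ⁻¹ ζ⁻¹ z⁻¹
    ha hb hcz hab hac hbc
  have e1 : x - sh ζ⁻¹ - sh z⁻¹ + sh γ⁻¹ + sh ζ⁻¹ = x + sh γ⁻¹ - sh z⁻¹ := by
    abel
  have e2 : x - sh ζ⁻¹ - sh z⁻¹ + sh z⁻¹ = x - sh ζ⁻¹ := by abel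
  have e3 : x - sh ζ⁻¹ - sh z⁻¹ + sh γ⁻¹ + sh z⁻¹ = x + sh γ⁻¹ - sh ζ⁻¹ := by
    abel
  have e4 : x - sh ζ⁻¹ - sh z⁻¹ + sh ζ⁻¹ = x - sh z⁻¹ := by abel
  have e5 : x - sh ζ⁻¹ - sh z⁻¹ + sh γ⁻¹ = x + sh γ⁻¹ - sh ζ⁻¹ - sh z⁻¹ := by
    abel
  have e6 : x - sh ζ⁻¹ - sh z⁻¹ + sh ζ⁻¹ + sh z⁻¹ = x := by abel
  rw [e1, e2, e3, e6, e4, e5] at key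
  have hγζ' : γ - ζ ≠ 0 := sub_ne_zero.mpr hγζ
  have hzγ' : z - γ ≠ 0 := sub_ne_zero.mpr (Ne.symm hγz)
  set T1 := τ (x + sh γ⁻¹ - sh z⁻¹) with hT1
  set T2 := τ (x - sh ζ⁻¹) with hT2
  set T3 := τ (x + sh γ⁻¹ - sh ζ⁻¹) with hT3
  set T4 := τ (x - sh z⁻¹) with hT4
  set T5 := τ (x + sh γ⁻¹ - sh ζ⁻¹ - sh z⁻¹) with hT5
  set T6 := τ x with hT6
  have key2 : (ζ - γ) * T1 * T2 - (z - γ) * T3 * T4 + (z - ζ) * T5 * T6 = 0 := by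
    have hne : ((γ * ζ * z) ^ 2 : ℂ) ≠ 0 :=
      pow_ne_zero _ (mul_ne_zero (mul_ne_zero hγ hζ) hz)
    apply mul_left_cancel₀ hne
    rw [mul_zero]
    field_simp at key
    linear_combination (γ * ζ * z) ^ 2 * key
  field_simp
  linear_combination key2
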